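/- For β < 0, q ≥ 2, and all n ≥ 3, the internal energy per particle of the Potts model on cycles satisfies U_{C_n}^q(β) > U_{C_{n+1}}^q(β). -/

import Mathlib

open scoped Classical
open Finset

/-- Number of monochromatic edges of `G` under the coloring `σ`. -/
noncomputable def monoEdges {V : Type} [Fintype V] (G : SimpleGraph V) {q : ℕ}
    (σ : V → Fin q) : ℕ :=
  (G.edgeFinset.filter fun e =>
    Sym2.lift ⟨fun u v => σ u = σ v, fun _ _ => propext eq_comm⟩ e).card

/-- The `q`-color Potts partition function of `G` at inverse temperature `β`. -/
noncomputable def pottsZ {V : Type} [Fintype V] (G : SimpleGraph V) (q : ℕ) (β : ℝ) : ℝ :=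
  ∑ σ : V → Fin q, Real.exp (-β * monoEdges G σ)

/-- The internal energy per particle: expected number of monochromatic
edges per vertex in the Potts model. -/
noncomputable def pottsU {V : Type} [Fintype V] (G : SimpleGraph V) (q : ℕ) (β : ℝ) : ℝ :=
  (Fintype.card V : ℝ)⁻¹ *
    (∑ σ : V → Fin q, (monoEdges G σ : ℝ) * Real.exp (-β * monoEdges G σ)) / pottsZ G q β

/-- The number of proper `q`-colorings of `G`. -/
noncomputable def properCount {V : Type} [Fintype V] (G : SimpleGraph V) (q : ℕ) : ℕ :=
  (Finset.univ.filter fun σ : V → Fin q => monoEdges G σ = 0).card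

/-!
Put `y = exp (-β)`. Colorings of the cycle `0, 1, …, n` are colored paths whose two ends are
joined, and summing `y ^ (number of monochromatic edges)` over paths with equal ends satisfies a
linear recursion in the length; this gives `Z_n(y) = (y + q - 1)^n + (q - 1) (y - 1)^n` for the
`n`-cycle. The energy sum is `y Z_n'(y) = n y Z_{n-1}(y)`, so `U_{C_n} = y Z_{n-1} / Z_n`. For
`β < 0` we have `y > 1`, and `Z_{n-1} Z_{n+1} - Z_n^2 = (q - 1) q^2 ((y + q - 1)(y - 1))^{n-1} > 0`,
which is the claimed monotonicity.
-/

/-- The trace of `T ^ n` for the Potts transfer matrix `T = J + (y - 1) I` on `q` colors, whose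
eigenvalues are `y + q - 1` (once) and `y - 1` (`q - 1` times). -/
def cyclePartition {R : Type*} [CommRing R] (q : ℕ) (y : R) (n : ℕ) : R :=
  (y + q - 1) ^ n + (q - 1) * (y - 1) ^ n

section Counting

variable {α : Type*} {n : ℕ}

lemma sum_pi_fin_succ_eq_sum_snoc [Fintype α] {M : Type*} [AddCommMonoid M]
    (F : (Fin (n + 1) → α) → M) :
    ∑ τ, F τ = ∑ σ : Fin n → α, ∑ c, F (Fin.snoc σ c) := by
  rw [← (Fin.snocEquiv fun _ => α).sum_comp, Fintype.sum_prod_type, Finset.sum_comm]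
  rfl

variable [DecidableEq α]

def pathMonoCount (σ : Fin (n + 1) → α) : ℕ :=
  ∑ i : Fin n, if σ i.castSucc = σ i.succ then 1 else 0

def cycleMonoCount (σ : Fin (n + 1) → α) : ℕ :=
  ∑ i, if σ i = σ (i + 1) then 1 else 0

lemma cycleMonoCount_eq_pathMonoCount_add (σ : Fin (n + 1) → α) :
    cycleMonoCount σ = pathMonoCount σ + if σ (Fin.last n) = σ 0 then 1 else 0 := by
  simp only [cycleMonoCount, pathMonoCount, Fin.sum_univ_castSucc, Fin.coeSucc_eq_succ,
    Fin.last_add_one]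

lemma pathMonoCount_snoc (σ : Fin (n + 1) → α) (c : α) :
    pathMonoCount (Fin.snoc σ c : Fin (n + 2) → α)
      = pathMonoCount σ + if σ (Fin.last n) = c then 1 else 0 := by
  simp only [pathMonoCount, Fin.sum_univ_castSucc, Fin.succ_castSucc, Fin.snoc_castSucc,
    Fin.succ_last, Fin.snoc_last]

variable [Fintype α] {R : Type*} [CommRing R]

lemma sum_pow_ite_eq (y : R) (a : α) :
    ∑ c, y ^ (if a = c then 1 else 0) = y + Fintype.card α - 1 := by
  have h (c : α) : y ^ (if a = c then 1 else 0) = 1 + if a = c then y - 1 else 0 := by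
    split_ifs <;> simp
  simp only [h, Finset.sum_add_distrib, Finset.sum_ite_eq, Finset.mem_univ, if_true,
    Finset.sum_const, Finset.card_univ, nsmul_eq_mul, mul_one]
  ring

lemma sum_pow_pathMonoCount (y : R) (n : ℕ) :
    ∑ σ : Fin (n + 1) → α, y ^ pathMonoCount σ
      = Fintype.card α * (y + Fintype.card α - 1) ^ n := by
  induction n with
  | zero =>
    simp only [pathMonoCount, Finset.univ_eq_empty, Finset.sum_empty, pow_zero, mul_one,
      Finset.sum_const, Finset.card_univ, Fintype.card_fun, Fintype.card_fin, zero_add,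
      pow_one, nsmul_eq_mul]
  | succ n ih =>
    simp only [sum_pi_fin_succ_eq_sum_snoc (n := n + 1), pathMonoCount_snoc, pow_add,
      ← Finset.mul_sum, sum_pow_ite_eq, ← Finset.sum_mul, ih]
    ring

def closedPathSum (α : Type*) [Fintype α] [DecidableEq α] (y : R) (n : ℕ) : R :=
  ∑ σ : Fin (n + 1) → α, if σ (Fin.last n) = σ 0 then y ^ pathMonoCount σ else 0

lemma closedPathSum_succ (y : R) (n : ℕ) :
    closedPathSum α y (n + 1) = ∑ σ : Fin (n + 1) → α, y ^ cycleMonoCount σ := by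
  have snoc_zero (σ : Fin (n + 1) → α) (c : α) : (Fin.snoc σ c : Fin (n + 2) → α) 0 = σ 0 :=
    Fin.snoc_castSucc (i := 0) ..
  simp only [closedPathSum, sum_pi_fin_succ_eq_sum_snoc (n := n + 1), Fin.snoc_last, snoc_zero,
    pathMonoCount_snoc, Finset.sum_ite_eq', Finset.mem_univ, if_true,
    cycleMonoCount_eq_pathMonoCount_add]

lemma sum_pow_cycleMonoCount_eq (y : R) (n : ℕ) :
    ∑ σ : Fin (n + 1) → α, y ^ cycleMonoCount σ
      = ∑ σ : Fin (n + 1) → α, y ^ pathMonoCount σ + (y - 1) * closedPathSum α y n := by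
  rw [closedPathSum, Finset.mul_sum, ← Finset.sum_add_distrib]
  refine Finset.sum_congr rfl fun σ _ => ?_
  rw [cycleMonoCount_eq_pathMonoCount_add, pow_add]
  split_ifs <;> ring

lemma closedPathSum_eq_cyclePartition (y : R) (n : ℕ) :
    closedPathSum α y n = cyclePartition (Fintype.card α) y n := by
  induction n with
  | zero => simp [closedPathSum, cyclePartition, sum_pow_pathMonoCount]
  | succ n ih =>
    rw [closedPathSum_succ, sum_pow_cycleMonoCount_eq, sum_pow_pathMonoCount, ih, cyclePartition,
      cyclePartition]
    ring

lemma sum_pow_cycleMonoCount (y : R) (n : ℕ) :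
    ∑ σ : Fin (n + 1) → α, y ^ cycleMonoCount σ = cyclePartition (Fintype.card α) y (n + 1) := by
  rw [← closedPathSum_succ, closedPathSum_eq_cyclePartition]

end Counting

lemma sum_natCast_mul_pow_eq_mul_deriv {ι : Type*} (s : Finset ι) (m : ι → ℕ) (y : ℝ) :
    ∑ i ∈ s, (m i : ℝ) * y ^ m i = y * deriv (fun x => ∑ i ∈ s, x ^ m i) y := by
  rw [deriv_fun_sum fun i _ => differentiableAt_pow _, Finset.mul_sum]
  refine Finset.sum_congr rfl fun i _ => ?_
  rw [(hasDerivAt_pow (m i) y).deriv]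
  cases m i with
  | zero => simp
  | succ k => push_cast; ring

lemma hasDerivAt_cyclePartition (q : ℕ) (y : ℝ) (n : ℕ) :
    HasDerivAt (fun x => cyclePartition q x (n + 1)) ((n + 1) * cyclePartition q y n) y := by
  have h := (((hasDerivAt_id' y).add_const ((q : ℝ) - 1)).fun_pow (n + 1)).fun_add
    ((((hasDerivAt_id' y).sub_const 1).fun_pow (n + 1)).const_mul ((q : ℝ) - 1))
  have hf : (fun x => cyclePartition q x (n + 1))
      = fun x : ℝ => (x + ((q : ℝ) - 1)) ^ (n + 1) + ((q : ℝ) - 1) * (x - 1) ^ (n + 1) := by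
    funext x
    simp only [cyclePartition]
    ring
  rw [hf]
  refine h.congr_deriv ?_
  simp only [cyclePartition, Nat.add_sub_cancel]
  push_cast
  ring

lemma sum_cycleMonoCount_mul_pow {α : Type*} [DecidableEq α] [Fintype α] (y : ℝ) (n : ℕ) :
    ∑ σ : Fin (n + 1) → α, (cycleMonoCount σ : ℝ) * y ^ cycleMonoCount σ
      = (n + 1) * y * cyclePartition (Fintype.card α) y n := by
  rw [sum_natCast_mul_pow_eq_mul_deriv]
  simp only [sum_pow_cycleMonoCount]
  rw [(hasDerivAt_cyclePartition _ y n).deriv]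
  ring

lemma cycleGraph_edgeFinset_eq_image {n : ℕ} [Fintype (SimpleGraph.cycleGraph (n + 2)).edgeSet] :
    (SimpleGraph.cycleGraph (n + 2)).edgeFinset = Finset.univ.image fun i => s(i, i + 1) := by
  ext e
  induction e using Sym2.ind with | h u v => ?_
  simp only [SimpleGraph.mem_edgeFinset, SimpleGraph.mem_edgeSet, SimpleGraph.cycleGraph_adj,
    sub_eq_iff_eq_add, Finset.mem_image, Finset.mem_univ, true_and, Sym2.eq_iff]
  constructor
  · rintro (rfl | rfl)
    · exact ⟨v, Or.inr ⟨rfl, add_comm _ _⟩⟩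
    · exact ⟨u, Or.inl ⟨rfl, add_comm _ _⟩⟩
  · rintro ⟨i, ⟨rfl, rfl⟩ | ⟨rfl, rfl⟩⟩
    · exact Or.inr (add_comm _ _)
    · exact Or.inl (add_comm _ _)

lemma injective_sym2_mk_self_add_one {n : ℕ} :
    Function.Injective fun i : Fin (n + 3) => s(i, i + 1) := by
  intro i j h
  rcases Sym2.eq_iff.mp h with ⟨hij, -⟩ | ⟨hij, hji⟩
  · exact hij
  · have h2 : (2 : Fin (n + 3)) = 0 := by
      open Fin.CommRing in linear_combination hji - hij
    have h2_mod : 2 % (n + 3) = 2 := Nat.mod_eq_of_lt (by omega)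
    simp [Fin.ext_iff, h2_mod] at h2

lemma monoEdges_cycleGraph {n q : ℕ} (σ : Fin (n + 3) → Fin q) :
    monoEdges (SimpleGraph.cycleGraph (n + 3)) σ = cycleMonoCount σ := by
  simp only [monoEdges, cycleGraph_edgeFinset_eq_image]
  rw [Finset.filter_image, Finset.card_image_of_injective _ injective_sym2_mk_self_add_one,
    Finset.card_filter, cycleMonoCount]
  congr!

lemma pottsU_cycleGraph (n q : ℕ) (β : ℝ) :
    pottsU (SimpleGraph.cycleGraph (n + 3)) q β
      = Real.exp (-β) * (cyclePartition q (Real.exp (-β)) (n + 2)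
          / cyclePartition q (Real.exp (-β)) (n + 3)) := by
  have hexp (m : ℕ) : Real.exp (-β * m) = Real.exp (-β) ^ m := by
    rw [mul_comm, Real.exp_nat_mul]
  calc pottsU (SimpleGraph.cycleGraph (n + 3)) q β
      = ((n + 3 : ℕ) : ℝ)⁻¹
          * (∑ σ : Fin (n + 3) → Fin q, (cycleMonoCount σ : ℝ) * Real.exp (-β) ^ cycleMonoCount σ)
          / ∑ σ : Fin (n + 3) → Fin q, Real.exp (-β) ^ cycleMonoCount σ := by
        rw [pottsU, pottsZ, Fintype.card_fin]
        -- `pottsU` sums over a `Fintype` instance built from the classical `DecidableEq`.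
        congr! 3 with σ σ
        · exact congrArg (@Finset.univ _) (Subsingleton.elim _ _)
        all_goals rw [monoEdges_cycleGraph, hexp]
    _ = _ := by
        rw [sum_cycleMonoCount_mul_pow, sum_pow_cycleMonoCount, Fintype.card_fin]
        push_cast
        field_simp
        ring

lemma cyclePartition_pos {q : ℕ} {y : ℝ} (hq : 1 ≤ q) (hy : 1 < y) (n : ℕ) :
    0 < cyclePartition q y n := by
  have hq' : (1 : ℝ) ≤ q := by exact_mod_cast hq
  have h1 : 0 < y + q - 1 := by linarith
  have h2 : 0 < y - 1 := by linarith
  have h3 : 0 ≤ (q : ℝ) - 1 := by linarith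
  unfold cyclePartition
  positivity

lemma cyclePartition_succ_div_lt {q : ℕ} {y : ℝ} (hq : 2 ≤ q) (hy : 1 < y) (n : ℕ) :
    cyclePartition q y (n + 1) / cyclePartition q y (n + 2)
      < cyclePartition q y n / cyclePartition q y (n + 1) := by
  have hq' : (2 : ℝ) ≤ q := by exact_mod_cast hq
  have hpos := cyclePartition_pos (by omega : 1 ≤ q) hy
  rw [div_lt_div_iff₀ (hpos _) (hpos _), ← sq, ← sub_pos]
  have log_convex_gap :
      cyclePartition q y n * cyclePartition q y (n + 2) - cyclePartition q y (n + 1) ^ 2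
        = ((q : ℝ) - 1) * q ^ 2 * ((y + q - 1) ^ n * (y - 1) ^ n) := by
    simp only [cyclePartition]
    ring
  have h1 : 0 < y + q - 1 := by linarith
  have h2 : 0 < y - 1 := by linarith
  have h3 : 0 < (q : ℝ) - 1 := by linarith
  rw [log_convex_gap]
  positivity

theorem potts_energy_cycle_ferro_decreasing (n : ℕ) (hn : 3 ≤ n)
    (q : ℕ) (hq : 2 ≤ q) (β : ℝ) (hβ : β < 0) :
    pottsU (SimpleGraph.cycleGraph (n + 1)) q β < pottsU (SimpleGraph.cycleGraph n) q β := by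
  obtain ⟨m, rfl⟩ : ∃ m, n = m + 3 := ⟨n - 3, by omega⟩
  have hy : 1 < Real.exp (-β) := Real.one_lt_exp_iff.mpr (by linarith)
  rw [show m + 3 + 1 = m + 1 + 3 by ring, pottsU_cycleGraph, pottsU_cycleGraph]
  exact mul_lt_mul_of_pos_left (cyclePartition_succ_div_lt hq hy (m + 2)) (by positivity)
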